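/- Let f ∈ E nonzero, φ ∈ X, and for s ∈ (0,‖f‖_{L^∞}) define the pseudo-inverse (f*∘a_φ)^{-1}(s) = sup{e ∈ [min φ, 0) : f*(a_φ(e)) > s}. Then (f*∘a_φ)^{-1} is nonincreasing, and for all (x,v): f^{*φ}(x,v) > s implies |v|²/2+φ(x) ≤ (f*∘a_φ)^{-1}(s), while f^{*φ}(x,v) ≤ s implies |v|²/2+φ(x) ≥ (f*∘a_φ)^{-1}(s). -/

import Mathlib

open MeasureTheory Real Filter Set ENNReal

noncomputable section

abbrev R3 := EuclideanSpace ℝ (Fin 3)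

def mX (φ : R3 → ℝ) : ℝ := ⨅ x : R3, (1 + ‖x‖) * |φ x|

def memX (φ : R3 → ℝ) : Prop :=
  Continuous φ ∧ (∀ x, φ x ≤ 0) ∧ Tendsto φ (cocompact R3) (nhds 0) ∧
    Integrable (fun x => ‖fderiv ℝ φ x‖ ^ 2) ∧ 0 < mX φ

def memE (f : R3 × R3 → ℝ) : Prop :=
  (∀ p, 0 ≤ f p) ∧ Integrable f ∧ MemLp f ⊤ volume ∧
    Integrable (fun p : R3 × R3 => ‖p.2‖ ^ 2 * f p)

def aphi (φ : R3 → ℝ) (e : ℝ) : ℝ :=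
  (8 * π * Real.sqrt 2 / 3) * ∫ x : R3, (max (e - φ x) 0) ^ ((3 : ℝ) / 2)

/-- Distribution function `μ_f(s) = meas{f > s}`. -/
def distFun (f : R3 × R3 → ℝ) (s : ℝ) : ℝ≥0∞ := volume {p : R3 × R3 | f p > s}

/-- Schwarz symmetric decreasing rearrangement on `ℝ₊`. -/
def schwarz (f : R3 × R3 → ℝ) (t : ℝ) : ℝ :=
  sInf {s : ℝ | 0 ≤ s ∧ distFun f s ≤ ENNReal.ofReal t}

/-- The generalized rearrangement `f^{*φ}` with respect to the microscopic energy. -/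
def genRearr (f : R3 × R3 → ℝ) (φ : R3 → ℝ) (p : R3 × R3) : ℝ :=
  if ‖p.2‖ ^ 2 / 2 + φ p.1 < 0 then schwarz f (aphi φ (‖p.2‖ ^ 2 / 2 + φ p.1)) else 0


/-- Pseudo-inverse of `f* ∘ a_φ`, with `m = min φ`. -/
def pseudoInv (f : R3 × R3 → ℝ) (φ : R3 → ℝ) (m : ℝ) (s : ℝ) : ℝ :=
  sSup {e : ℝ | e ∈ Ico m (0 : ℝ) ∧ schwarz f (aphi φ e) > s}

/-! The map `e ↦ f*(a_φ(e))` is nonincreasing on `[min φ, 0)`, because `a_φ` is nondecreasing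
there and `f*` is nonincreasing. For `s < ‖f‖_∞` it exceeds `s` at `e = min φ`, since
`a_φ(min φ) = 0` and `f*(0) ≥ ‖f‖_∞`; for `s > 0` it is at most `s` near `e = 0`, since
`meas{f > s} < ∞` while `a_φ(e) → ∞` as `e → 0⁻` (the bound `-φ(x) ≥ mX φ / (1 + |x|)` makes
`(e - φ)₊^{3/2}` bounded below on ever larger balls). Hence the superlevel set
`{e ∈ [min φ, 0) : f*(a_φ(e)) > s}` is a nonempty interval starting at `min φ` whose supremum
lies in `[min φ, 0)`, and `f^{*φ}(x, v) = f*(a_φ(|v|²/2 + φ(x)))` is compared with `s` by comparing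
the energy with that supremum. -/

open Topology

section SuperlevelSup

variable {g : ℝ → ℝ} {m b s : ℝ}

lemma le_sSup_superlevel {E : ℝ} (hE : E ∈ Ico m b) (hsE : g E > s) :
    E ≤ sSup {e | e ∈ Ico m b ∧ g e > s} :=
  le_csSup ⟨b, fun _ he => he.1.2.le⟩ ⟨hE, hsE⟩

lemma sSup_superlevel_le {E : ℝ} (hg : AntitoneOn g (Ico m b)) (hm : m < b) (hsm : g m > s)
    (hE : m ≤ E) (hsE : E < b → g E ≤ s) :
    sSup {e | e ∈ Ico m b ∧ g e > s} ≤ E := by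
  refine csSup_le ⟨m, ⟨le_rfl, hm⟩, hsm⟩ fun e ⟨he, hse⟩ => le_of_not_gt fun hEe => ?_
  have hEb : E < b := hEe.trans he.2
  exact (hsE hEb).not_gt (hse.trans_le (hg ⟨hE, hEb⟩ he hEe.le))

lemma sSup_superlevel_mem_Ico (hm : m < b) (hsm : g m > s) {e₀ : ℝ} (he₀ : e₀ < b)
    (hle : ∀ e ∈ Ico e₀ b, g e ≤ s) :
    sSup {e | e ∈ Ico m b ∧ g e > s} ∈ Ico m b := by
  refine ⟨le_sSup_superlevel ⟨le_rfl, hm⟩ hsm, lt_of_le_of_lt ?_ he₀⟩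
  exact csSup_le ⟨m, ⟨le_rfl, hm⟩, hsm⟩ fun e ⟨he, hse⟩ =>
    le_of_not_gt fun h => (hle e ⟨h.le, he.2⟩).not_gt hse

lemma sSup_superlevel_anti {s' : ℝ} (hm : m < b) (hsm : g m > s') (hss' : s ≤ s') :
    sSup {e | e ∈ Ico m b ∧ g e > s'} ≤ sSup {e | e ∈ Ico m b ∧ g e > s} :=
  csSup_le_csSup ⟨b, fun _ he => he.1.2.le⟩ ⟨m, ⟨le_rfl, hm⟩, hsm⟩
    fun _ ⟨he, hse⟩ => ⟨he, hss'.trans_lt hse⟩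

end SuperlevelSup

lemma isCompact_sublevel_of_tendsto_cocompact {X : Type*} [TopologicalSpace X] {φ : X → ℝ}
    (hφc : Continuous φ) (hφ0 : Tendsto φ (cocompact X) (𝓝 0)) {e : ℝ} (he : e < 0) :
    IsCompact {x | φ x ≤ e} := by
  obtain ⟨K, hK, hKs⟩ := mem_cocompact.1 (hφ0 (Ioi_mem_nhds he))
  refine hK.of_isClosed_subset (isClosed_le hφc continuous_const) fun x hx => ?_
  by_contra hxK
  exact (show e < φ x from hKs hxK).not_ge hx

section Potential

variable {φ : R3 → ℝ}

lemma mX_div_le_neg (hφ : ∀ x, φ x ≤ 0) (x : R3) : mX φ / (1 + ‖x‖) ≤ -φ x := by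
  rw [div_le_iff₀ (by positivity), ← abs_of_nonpos (hφ x), mul_comm]
  exact ciInf_le ⟨0, by rintro _ ⟨y, rfl⟩; positivity⟩ x

lemma memX.lt_zero (hφ : memX φ) (x : R3) : φ x < 0 :=
  neg_pos.1 <| (div_pos hφ.2.2.2.2 (by positivity)).trans_le (mX_div_le_neg hφ.2.1 x)

lemma integrable_aphi_integrand (hφc : Continuous φ) (hφ0 : Tendsto φ (cocompact R3) (𝓝 0))
    {e : ℝ} (he : e < 0) : Integrable fun x : R3 => max (e - φ x) 0 ^ ((3 : ℝ) / 2) := by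
  refine (((continuous_const.sub hφc).max continuous_const).rpow_const
    fun _ => Or.inr (by norm_num)).integrable_of_hasCompactSupport ?_
  refine HasCompactSupport.intro (isCompact_sublevel_of_tendsto_cocompact hφc hφ0 he)
    fun x hx => ?_
  show max (e - φ x) 0 ^ ((3 : ℝ) / 2) = 0
  rw [max_eq_right (by linarith [not_le.1 (show ¬φ x ≤ e from hx)]), zero_rpow (by norm_num)]

lemma aphi_monotoneOn (hφc : Continuous φ) (hφ0 : Tendsto φ (cocompact R3) (𝓝 0)) :
    MonotoneOn (aphi φ) (Iio 0) := fun e he e' he' hee' =>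
  mul_le_mul_of_nonneg_left (integral_mono (integrable_aphi_integrand hφc hφ0 he)
    (integrable_aphi_integrand hφc hφ0 he') fun x => by gcongr) (by positivity)

lemma aphi_eq_zero_of_le {e : ℝ} (he : ∀ x, e ≤ φ x) : aphi φ e = 0 := by
  have h : ∀ x, max (e - φ x) 0 ^ ((3 : ℝ) / 2) = 0 := fun x => by
    rw [max_eq_right (by linarith [he x]), zero_rpow (by norm_num)]
  simp only [aphi, h, integral_zero, mul_zero]

lemma le_aphi_of_forall_mem_ball (hφc : Continuous φ) (hφ0 : Tendsto φ (cocompact R3) (𝓝 0))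
    {e δ R : ℝ} (he : e < 0) (hδ : 0 ≤ δ) (hball : ∀ x ∈ Metric.ball (0 : R3) R, δ ≤ e - φ x) :
    8 * π * √2 / 3 * (δ ^ ((3 : ℝ) / 2) * volume.real (Metric.ball (0 : R3) R)) ≤ aphi φ e := by
  refine mul_le_mul_of_nonneg_left ?_ (by positivity)
  have hint := integrable_aphi_integrand hφc hφ0 he
  calc δ ^ ((3 : ℝ) / 2) * volume.real (Metric.ball (0 : R3) R)
      ≤ ∫ x in Metric.ball (0 : R3) R, max (e - φ x) 0 ^ ((3 : ℝ) / 2) :=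
        setIntegral_ge_of_const_le_real measurableSet_ball measure_ball_lt_top.ne
          (fun x hx => rpow_le_rpow hδ ((hball x hx).trans (le_max_left _ _)) (by norm_num))
          hint.integrableOn
    _ ≤ ∫ x, max (e - φ x) 0 ^ ((3 : ℝ) / 2) :=
        setIntegral_le_integral hint (Eventually.of_forall fun x => by positivity)

lemma exists_neg_le_aphi (hφ : memX φ) (D : ℝ) : ∃ e < 0, D ≤ aphi φ e := by
  obtain ⟨hφc, hφle, hφ0, -, ha⟩ := hφ
  set a := mX φ
  set C := 8 * π * √2 / 3
  set v := volume.real (Metric.ball (0 : R3) 1)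
  have hv : 0 < v := toReal_pos (Metric.measure_ball_pos _ _ one_pos).ne' measure_ball_lt_top.ne
  -- on `ball 0 R` we have `-φ ≥ a / (1 + R) = 2δ`, so `aphi φ (-δ) ≥ C δ² v R³ ≥ C v a² R / 16`
  set R := max (max 1 (a / 2)) (16 * D / (C * v * a ^ 2))
  have hR1 : 1 ≤ R := (le_max_left _ _).trans (le_max_left _ _)
  have hRa : a / 2 ≤ R := (le_max_right _ _).trans (le_max_left _ _)
  have hRD : 16 * D / (C * v * a ^ 2) ≤ R := le_max_right _ _
  set δ := a / (2 * (1 + R))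
  have hδa : δ * (2 * (1 + R)) = a := div_mul_cancel₀ _ (by positivity)
  have hδ : 0 < δ := by positivity
  have hδ1 : δ ≤ 1 := by rw [div_le_one (by positivity)]; linarith
  refine ⟨-δ, neg_lt_zero.2 hδ, ?_⟩
  have hball : ∀ x ∈ Metric.ball (0 : R3) R, δ ≤ -δ - φ x := fun x hx => by
    have hx : ‖x‖ < R := mem_ball_zero_iff.1 hx
    have : a / (1 + R) ≤ a / (1 + ‖x‖) :=
      div_le_div_of_nonneg_left ha.le (by positivity) (by linarith)
    have : a / (1 + R) = 2 * δ := by field_simp; linarith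
    linarith [mX_div_le_neg hφle x]
  have hvol : volume.real (Metric.ball (0 : R3) R) = R ^ 3 * v := by
    simp only [measureReal_def, Measure.addHaar_ball volume (0 : R3) (by linarith : (0 : ℝ) ≤ R),
      finrank_euclideanSpace_fin, ENNReal.toReal_mul,
      ENNReal.toReal_ofReal (by positivity : (0 : ℝ) ≤ R ^ 3), v]
  have hpow : δ ^ 2 ≤ δ ^ ((3 : ℝ) / 2) := by
    rw [← Real.rpow_natCast]; exact rpow_le_rpow_of_exponent_ge hδ hδ1 (by norm_num)
  have hgrowth : a ^ 2 * R ≤ 16 * (δ ^ 2 * R ^ 3) := by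
    have h : (1 + R) ^ 2 ≤ 4 * R ^ 2 := by nlinarith
    calc a ^ 2 * R = 4 * (δ ^ 2 * R) * (1 + R) ^ 2 := by rw [← hδa]; ring
      _ ≤ 4 * (δ ^ 2 * R) * (4 * R ^ 2) := by gcongr
      _ = 16 * (δ ^ 2 * R ^ 3) := by ring
  calc D ≤ C * v * a ^ 2 * R / 16 := by
        rw [div_le_iff₀ (by positivity)] at hRD
        rw [le_div_iff₀ (by norm_num)]
        linarith
    _ ≤ C * (δ ^ 2 * (R ^ 3 * v)) := by
        linarith [mul_le_mul_of_nonneg_left hgrowth (by positivity : 0 ≤ C * v)]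
    _ ≤ C * (δ ^ ((3 : ℝ) / 2) * volume.real (Metric.ball (0 : R3) R)) := by
        rw [hvol]; gcongr
    _ ≤ aphi φ (-δ) := le_aphi_of_forall_mem_ball hφc hφ0 (neg_lt_zero.2 hδ) hδ.le hball

end Potential

lemma genRearr_of_neg {f : R3 × R3 → ℝ} {φ : R3 → ℝ} {p : R3 × R3}
    (h : ‖p.2‖ ^ 2 / 2 + φ p.1 < 0) :
    genRearr f φ p = schwarz f (aphi φ (‖p.2‖ ^ 2 / 2 + φ p.1)) :=
  if_pos h

lemma genRearr_of_nonneg {f : R3 × R3 → ℝ} {φ : R3 → ℝ} {p : R3 × R3}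
    (h : ¬‖p.2‖ ^ 2 / 2 + φ p.1 < 0) : genRearr f φ p = 0 :=
  if_neg h

lemma ae_le_eLpNorm_top_toReal {α : Type*} [MeasurableSpace α] {μ : Measure α} {f : α → ℝ}
    (hf : MemLp f ⊤ μ) : ∀ᵐ p ∂μ, f p ≤ (eLpNorm f ⊤ μ).toReal := by
  filter_upwards [ae_le_eLpNormEssSup (f := f) (μ := μ)] with p hp
  rw [← eLpNorm_exponent_top] at hp
  calc f p ≤ ‖f p‖ := le_norm_self _
    _ = (‖f p‖ₑ).toReal := (toReal_enorm _).symm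
    _ ≤ (eLpNorm f ⊤ μ).toReal := ENNReal.toReal_mono hf.2.ne hp

section Schwarz

variable {f : R3 × R3 → ℝ}

lemma distFun_eLpNorm_top (hf : MemLp f ⊤ volume) :
    distFun f (eLpNorm f ⊤ volume).toReal = 0 := by
  simpa only [distFun, gt_iff_lt, ae_iff, not_le] using ae_le_eLpNorm_top_toReal hf

lemma bddBelow_schwarz_set (t : ℝ) :
    BddBelow {s : ℝ | 0 ≤ s ∧ distFun f s ≤ ENNReal.ofReal t} :=
  ⟨0, fun _ hs => hs.1⟩

lemma eLpNorm_top_toReal_mem_schwarz_set (hf : MemLp f ⊤ volume) (t : ℝ) :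
    (eLpNorm f ⊤ volume).toReal ∈ {s : ℝ | 0 ≤ s ∧ distFun f s ≤ ENNReal.ofReal t} :=
  ⟨toReal_nonneg, by rw [distFun_eLpNorm_top hf]; exact zero_le⟩

lemma schwarz_le {s t : ℝ} (hs : 0 ≤ s) (h : distFun f s ≤ ENNReal.ofReal t) :
    schwarz f t ≤ s :=
  csInf_le (bddBelow_schwarz_set t) ⟨hs, h⟩

lemma schwarz_antitone (hf : MemLp f ⊤ volume) : Antitone (schwarz f) := fun t t' htt' =>
  csInf_le_csInf (bddBelow_schwarz_set t') ⟨_, eLpNorm_top_toReal_mem_schwarz_set hf t⟩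
    fun _ ⟨hs, hsd⟩ => ⟨hs, hsd.trans (ENNReal.ofReal_le_ofReal htt')⟩

lemma eLpNorm_top_toReal_le_schwarz_zero (hf0 : ∀ p, 0 ≤ f p) (hf : MemLp f ⊤ volume) :
    (eLpNorm f ⊤ volume).toReal ≤ schwarz f 0 := by
  refine le_csInf ⟨_, eLpNorm_top_toReal_mem_schwarz_set hf 0⟩ fun s ⟨hs, hsd⟩ => ?_
  have hae : ∀ᵐ p ∂volume, ‖f p‖ ≤ s := by
    rw [ENNReal.ofReal_zero, nonpos_iff_eq_zero, distFun] at hsd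
    simpa only [ae_iff, not_le, norm_of_nonneg (hf0 _), gt_iff_lt] using hsd
  rw [eLpNorm_exponent_top]
  exact toReal_le_of_le_ofReal hs (eLpNormEssSup_le_of_ae_bound hae)

end Schwarz

lemma exists_schwarz_aphi_le {f : R3 × R3 → ℝ} {φ : R3 → ℝ} (hf : Integrable f) (hφ : memX φ)
    {s : ℝ} (hs : 0 < s) : ∃ e₀ < 0, ∀ e ∈ Ico e₀ 0, schwarz f (aphi φ e) ≤ s := by
  have hfin : distFun f s ≠ ⊤ := (hf.measure_gt_lt_top hs).ne
  obtain ⟨e₀, he₀, hD⟩ := exists_neg_le_aphi hφ (distFun f s).toReal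
  refine ⟨e₀, he₀, fun e ⟨he₀e, he⟩ => schwarz_le hs.le ?_⟩
  calc distFun f s = ENNReal.ofReal (distFun f s).toReal := (ofReal_toReal hfin).symm
    _ ≤ ENNReal.ofReal (aphi φ e) :=
      ENNReal.ofReal_le_ofReal (hD.trans (aphi_monotoneOn hφ.1 hφ.2.2.1 he₀ he he₀e))

theorem pseudoInv_properties_general (f : R3 × R3 → ℝ) (hf : memE f)
    (φ : R3 → ℝ) (hφ : memX φ)
    (x₀ : R3) (hx₀ : ∀ x, φ x₀ ≤ φ x) :
    AntitoneOn (pseudoInv f φ (φ x₀)) (Ioo 0 ((eLpNorm f ⊤ volume).toReal)) ∧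
    (∀ s ∈ Ioo (0 : ℝ) ((eLpNorm f ⊤ volume).toReal),
      pseudoInv f φ (φ x₀) s ∈ Ico (φ x₀) (0 : ℝ)) ∧
    (∀ s ∈ Ioo (0 : ℝ) ((eLpNorm f ⊤ volume).toReal), ∀ p : R3 × R3,
      (genRearr f φ p > s → ‖p.2‖ ^ 2 / 2 + φ p.1 ≤ pseudoInv f φ (φ x₀) s) ∧
      (genRearr f φ p ≤ s → ‖p.2‖ ^ 2 / 2 + φ p.1 ≥ pseudoInv f φ (φ x₀) s)) := by
  obtain ⟨hf0, hfi, hfM, -⟩ := hf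
  have hm0 : φ x₀ < 0 := hφ.lt_zero x₀
  have hG : AntitoneOn (fun e => schwarz f (aphi φ e)) (Ico (φ x₀) 0) := fun e he e' he' hee' =>
    schwarz_antitone hfM (aphi_monotoneOn hφ.1 hφ.2.2.1 he.2 he'.2 hee')
  have hGm : ∀ s < (eLpNorm f ⊤ volume).toReal, schwarz f (aphi φ (φ x₀)) > s := fun s hs => by
    rw [aphi_eq_zero_of_le hx₀]
    exact hs.trans_le (eLpNorm_top_toReal_le_schwarz_zero hf0 hfM)
  refine ⟨fun s _ s' hs' hss' => sSup_superlevel_anti hm0 (hGm s' hs'.2) hss', fun s hs => ?_,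
    fun s hs p => ?_⟩
  · obtain ⟨e₀, he₀, hle⟩ := exists_schwarz_aphi_le hfi hφ hs.1
    exact sSup_superlevel_mem_Ico hm0 (hGm s hs.2) he₀ hle
  have hmE : φ x₀ ≤ ‖p.2‖ ^ 2 / 2 + φ p.1 := le_add_of_nonneg_of_le (by positivity) (hx₀ p.1)
  refine ⟨fun hgt => ?_, fun hle => ?_⟩
  · have hE0 : ‖p.2‖ ^ 2 / 2 + φ p.1 < 0 := by
      by_contra hE0
      exact hs.1.not_gt (genRearr_of_nonneg hE0 ▸ hgt)
    exact le_sSup_superlevel ⟨hmE, hE0⟩ (genRearr_of_neg hE0 ▸ hgt)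
  · exact sSup_superlevel_le hG hm0 (hGm s hs.2) hmE fun hE0 => genRearr_of_neg hE0 ▸ hle

theorem pseudoInv_properties (f : R3 × R3 → ℝ) (hf : memE f)
    (hne : ¬ (f =ᵐ[volume] 0)) (φ : R3 → ℝ) (hφ : memX φ)
    (x₀ : R3) (hx₀ : ∀ x, φ x₀ ≤ φ x) :
    AntitoneOn (pseudoInv f φ (φ x₀)) (Ioo 0 ((eLpNorm f ⊤ volume).toReal)) ∧
    (∀ s ∈ Ioo (0 : ℝ) ((eLpNorm f ⊤ volume).toReal),
      pseudoInv f φ (φ x₀) s ∈ Ico (φ x₀) (0 : ℝ)) ∧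
    (∀ s ∈ Ioo (0 : ℝ) ((eLpNorm f ⊤ volume).toReal), ∀ p : R3 × R3,
      (genRearr f φ p > s → ‖p.2‖ ^ 2 / 2 + φ p.1 ≤ pseudoInv f φ (φ x₀) s) ∧
      (genRearr f φ p ≤ s → ‖p.2‖ ^ 2 / 2 + φ p.1 ≥ pseudoInv f φ (φ x₀) s)) :=
  pseudoInv_properties_general f hf φ hφ x₀ hx₀
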